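/- arXiv:1911.02203 — 5 statements merged into one kernel-verified Lean document; each statement's English description precedes it below -/
import Mathlib

section
/- For every graph G without isolated vertices, every super dominating set of G has cardinality at least ⌈n/2⌉, where n is the order of G. -/
open SimpleGraph

/-- `S` is a super dominating set of `G`: every vertex `u ∉ S` has some `v ∈ S`
with `N(v) ∩ Sᶜ = {u}`. -/
def SuperDomSet {V : Type} (G : SimpleGraph V) (S : Set V) : Prop :=
  ∀ u ∈ Sᶜ, ∃ v ∈ S, G.neighborSet v ∩ Sᶜ = {u}

/-- The super domination number `γ_sp(G)`. -/
noncomputable def superDomNum {V : Type} (G : SimpleGraph V) : ℕ :=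
  sInf {n | ∃ S : Set V, SuperDomSet G S ∧ S.ncard = n}

/-- `S` is a dominating set of `G`. -/
def DomSet {V : Type} (G : SimpleGraph V) (S : Set V) : Prop :=
  ∀ u ∉ S, ∃ v ∈ S, G.Adj v u

/-- The domination number `γ(G)`. -/
noncomputable def domNum {V : Type} (G : SimpleGraph V) : ℕ :=
  sInf {n | ∃ S : Set V, DomSet G S ∧ S.ncard = n}

/-- `S` is a total dominating set of `G`: every vertex has a neighbor in `S`. -/
def TotalDomSet {V : Type} (G : SimpleGraph V) (S : Set V) : Prop :=
  ∀ u : V, ∃ v ∈ S, G.Adj v u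

/-- The total domination number `γ_t(G)`. -/
noncomputable def totalDomNum {V : Type} (G : SimpleGraph V) : ℕ :=
  sInf {n | ∃ S : Set V, TotalDomSet G S ∧ S.ncard = n}

/-- A leaf is a vertex of degree 1. -/
def IsLeaf {V : Type} (G : SimpleGraph V) (v : V) : Prop :=
  (G.neighborSet v).ncard = 1

/-- A support vertex is a vertex adjacent to a leaf. -/
def IsSupport {V : Type} (G : SimpleGraph V) (v : V) : Prop :=
  ∃ u, G.Adj v u ∧ IsLeaf G u

/-- Every super dominating set of a graph without isolated vertices has cardinality at
least `⌈n/2⌉`. -/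
theorem superDomSet_card_ge {V : Type} [Fintype V] (G : SimpleGraph V)
    (hiso : ∀ v : V, ∃ u, G.Adj v u) (S : Set V) (hS : SuperDomSet G S) :
    (Fintype.card V + 1) / 2 ≤ S.ncard := by
  classical
  choose f hfS hfN using hS
  set g : V → V := fun u => if h : u ∈ Sᶜ then f u h else u with hg
  have hmap : ∀ u ∈ Sᶜ, g u ∈ S := by
    intro u hu; simp only [hg, dif_pos hu]; exact hfS u hu
  have hinj : Set.InjOn g Sᶜ := by
    intro u1 h1 u2 h2 he
    simp only [hg, dif_pos h1, dif_pos h2] at he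
    have e1 := hfN u1 h1
    have e2 := hfN u2 h2
    rw [he, e2] at e1
    exact (Set.singleton_eq_singleton_iff.mp e1).symm
  have hle : Sᶜ.ncard ≤ S.ncard :=
    Set.ncard_le_ncard_of_injOn g hmap hinj (Set.toFinite S)
  have hsum : S.ncard + Sᶜ.ncard = Fintype.card V := by
    rw [Set.ncard_add_ncard_compl, Nat.card_eq_fintype_card]
  omega
end

section
/- Let G be a connected graph of order at least 2, let v be a support vertex of G, and let S be a minimum super dominating set of G. Then at most one vertex among v and the leaf-neighbors of v belongs to the complement S̄ = V(G) \ S. -/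
open SimpleGraph

/-- At most one vertex among a support vertex `v` and its leaf-neighbors lies outside a
minimum super dominating set. -/
theorem support_leaves_compl {V : Type} [Fintype V] (G : SimpleGraph V)
    (hconn : G.Connected) (hcard : 2 ≤ Fintype.card V) (v : V) (hv : IsSupport G v)
    (S : Set V) (hS : SuperDomSet G S) (hmin : S.ncard = superDomNum G) :
    ((insert v {u | IsLeaf G u ∧ G.Adj v u}) ∩ Sᶜ).ncard ≤ 1 := by
  -- key: if a leaf u adjacent to v is in Sᶜ, then v ∈ S and N(v) ∩ Sᶜ = {u}
  have key : ∀ u, IsLeaf G u → G.Adj v u → u ∈ Sᶜ →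
      v ∈ S ∧ G.neighborSet v ∩ Sᶜ = {u} := by
    intro u hleaf hadj hu
    obtain ⟨w, hwS, hw⟩ := hS u hu
    have huw : u ∈ G.neighborSet w ∩ Sᶜ := by rw [hw]; exact rfl
    have hadj' : w ∈ G.neighborSet u := G.adj_symm huw.1
    obtain ⟨a, ha⟩ := Set.ncard_eq_one.mp hleaf
    have hva : v = a := by
      have : v ∈ G.neighborSet u := hadj.symm
      rwa [ha, Set.mem_singleton_iff] at this
    have hwa : w = a := by rwa [ha, Set.mem_singleton_iff] at hadj'
    subst hva
    rw [hwa] at hwS hw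
    exact ⟨hwS, hw⟩
  rw [Set.ncard_le_one_iff_eq]
  rcases Set.eq_empty_or_nonempty ((insert v {u | IsLeaf G u ∧ G.Adj v u}) ∩ Sᶜ) with h | ⟨x, hx⟩
  · left; exact h
  · right
    refine ⟨x, Set.eq_singleton_iff_unique_mem.mpr ⟨hx, ?_⟩⟩
    intro y hy
    -- show any two elements are equal; it suffices: any element equals x
    have hmem : ∀ z ∈ (insert v {u | IsLeaf G u ∧ G.Adj v u}) ∩ Sᶜ,
        z = v ∨ (IsLeaf G z ∧ G.Adj v z) := fun z hz => hz.1
    have elemeq : ∀ a b, a ∈ (insert v {u | IsLeaf G u ∧ G.Adj v u}) ∩ Sᶜ →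
        b ∈ (insert v {u | IsLeaf G u ∧ G.Adj v u}) ∩ Sᶜ → a = b := by
      intro a b ha hb
      rcases hmem a ha with rfl | ⟨hal, haa⟩
      · rcases hmem b hb with rfl | ⟨hbl, hba⟩
        · rfl
        · exact absurd (key b hbl hba hb.2).1 ha.2
      · rcases hmem b hb with rfl | ⟨hbl, hba⟩
        · exact absurd (key a hal haa ha.2).1 hb.2
        · have h1 := (key a hal haa ha.2).2
          have h2 := (key b hbl hba hb.2).2
          rw [h1] at h2
          exact (Set.singleton_eq_singleton_iff.mp h2)
    exact elemeq y x hy hx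
end

section
/- Let T be a tree of order at least 2 and let v be a leaf of T. Then there exists a minimum super dominating set S of T such that v ∉ S (equivalently, v lies in the complement S̄). -/
open SimpleGraph

/-
Start from a minimum super dominating set `S`, let `w` be the neighbour of the leaf `v`, and pick
for every `u ∉ S` a private neighbour `f u ∈ S`. Let `E` be the set of vertices outside `S` that
can be reached, along a path avoiding `w`, from a vertex outside `S` in the closed neighbourhood
`N[w]`. Moving `E` into `S` and moving `f x` out of `S` for every `x ∈ E` with `f x ∉ N[w]` keeps
the set super dominating (`x` now privately dominates `f x`) and puts `N[w]` inside it. In a tree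
at most one `x ∈ E` has `f x ∈ N[w]` (two distinct neighbours of `w` are not joined by a path
avoiding `w`), so the new set is at most one vertex larger. Finally `v` can be
dropped, since `w` privately dominates it.
-/

variable {V : Type} {G : SimpleGraph V}

lemma SimpleGraph.IsAcyclic.not_reachable_deleteIncidenceSet (hG : G.IsAcyclic) {w a b : V}
    (ha : G.Adj w a) (hb : G.Adj w b) (hab : a ≠ b) :
    ¬ (G.deleteIncidenceSet w).Reachable a b := by
  intro hreach
  have hbridge : ¬ (G.deleteEdges {s(w, a)}).Reachable w a :=
    isAcyclic_iff_forall_adj_isBridge.mp hG ha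
  have hle : G.deleteIncidenceSet w ≤ G.deleteEdges {s(w, a)} :=
    deleteEdges_anti (Set.singleton_subset_iff.mpr ⟨ha, Sym2.mem_mk_left w a⟩)
  have hwb : (G.deleteEdges {s(w, a)}).Adj w b := by
    simp [hb, hab.symm, hb.ne']
  exact hbridge (hwb.reachable.trans (hreach.mono hle).symm)

lemma superDomSet_compl_iff {D : Set V} :
    SuperDomSet G Dᶜ ↔ ∀ u ∈ D, ∃ x ∉ D, G.neighborSet x ∩ D = {u} := by
  simp [SuperDomSet]

lemma superDomNum_le {S : Set V} (hS : SuperDomSet G S) : superDomNum G ≤ S.ncard :=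
  Nat.sInf_le ⟨S, hS, rfl⟩

lemma exists_superDomSet_ncard_eq_superDomNum (G : SimpleGraph V) :
    ∃ S, SuperDomSet G S ∧ S.ncard = superDomNum G :=
  Nat.sInf_mem (s := {n | ∃ S, SuperDomSet G S ∧ S.ncard = n})
    ⟨_, Set.univ, by simp [SuperDomSet], rfl⟩

/-- With `D = Sᶜ`, a private map witnesses that `S` is super dominating. -/
def IsPrivateMap (G : SimpleGraph V) (D : Set V) (f : V → V) : Prop :=
  ∀ u ∈ D, f u ∉ D ∧ G.neighborSet (f u) ∩ D = {u}

lemma SuperDomSet.exists_isPrivateMap {D : Set V} (h : SuperDomSet G Dᶜ) :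
    ∃ f, IsPrivateMap G D f := by
  rw [superDomSet_compl_iff] at h
  choose! f hf using h
  exact ⟨f, hf⟩

namespace IsPrivateMap

variable {D : Set V} {f : V → V}

lemma adj (hf : IsPrivateMap G D f) {u : V} (hu : u ∈ D) : G.Adj (f u) u := by
  have h : u ∈ G.neighborSet (f u) ∩ D := by rw [(hf u hu).2]; rfl
  exact h.1

lemma eq_of_adj (hf : IsPrivateMap G D f) {u y : V} (hu : u ∈ D) (hy : y ∈ D)
    (h : G.Adj (f u) y) : y = u := by
  have hmem : y ∈ G.neighborSet (f u) ∩ D := ⟨h, hy⟩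
  rwa [(hf u hu).2] at hmem

lemma injOn (hf : IsPrivateMap G D f) : Set.InjOn f D := fun _ ha _ hb hab =>
  hf.eq_of_adj hb ha (hab ▸ hf.adj ha)

variable {X Y : Set V}

theorem superDomSet_compl_exchange (hf : IsPrivateMap G D f) (hXD : X ⊆ D) (hYX : Y ⊆ X)
    (hadj : ∀ x ∈ Y, ∀ u ∈ D, G.Adj u x → u ∈ X)
    (hadj_apply : ∀ x ∈ Y, ∀ u ∈ D, G.Adj (f u) (f x) → u ∈ X) :
    SuperDomSet G ((D \ X) ∪ f '' Y)ᶜ := by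
  have hYD : Y ⊆ D := hYX.trans hXD
  rw [superDomSet_compl_iff]
  rintro u (⟨hu, huX⟩ | ⟨x, hx, rfl⟩)
  · refine ⟨f u, ?_, ?_⟩
    · rintro (⟨hfu, -⟩ | ⟨y, hy, hyu⟩)
      · exact (hf u hu).1 hfu
      · exact huX (hf.injOn (hYD hy) hu hyu ▸ hYX hy)
    · ext z
      simp only [Set.mem_inter_iff, mem_neighborSet, Set.mem_union, Set.mem_sdiff,
        Set.mem_image, Set.mem_singleton_iff]
      constructor
      · rintro ⟨hz, ⟨hzD, -⟩ | ⟨y, hy, rfl⟩⟩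
        · exact hf.eq_of_adj hu hzD hz
        · exact absurd (hadj_apply y hy u hu hz) huX
      · rintro rfl
        exact ⟨hf.adj hu, Or.inl ⟨hu, huX⟩⟩
  · refine ⟨x, ?_, ?_⟩
    · rintro (⟨-, hxX⟩ | ⟨y, hy, hyx⟩)
      · exact hxX (hYX hx)
      · exact (hf y (hYD hy)).1 (hyx ▸ hYD hx)
    · ext z
      simp only [Set.mem_inter_iff, mem_neighborSet, Set.mem_union, Set.mem_sdiff,
        Set.mem_image, Set.mem_singleton_iff]
      constructor
      · rintro ⟨hz, ⟨hzD, hzX⟩ | ⟨y, hy, rfl⟩⟩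
        · exact absurd (hadj x hx z hzD hz.symm) hzX
        · rw [hf.eq_of_adj (hYD hy) (hYD hx) hz.symm]
      · rintro rfl
        exact ⟨(hf.adj (hYD hx)).symm, Or.inr ⟨x, hx, rfl⟩⟩

theorem ncard_exchange_add_ncard_sdiff [Finite V] (hf : IsPrivateMap G D f) (hXD : X ⊆ D)
    (hYX : Y ⊆ X) : ((D \ X) ∪ f '' Y).ncard + (X \ Y).ncard = D.ncard := by
  have hYD : Y ⊆ D := hYX.trans hXD
  have hdisj : Disjoint (D \ X) (f '' Y) := by
    rw [Set.disjoint_left]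
    rintro _ ⟨hzD, -⟩ ⟨y, hy, rfl⟩
    exact (hf y (hYD hy)).1 hzD
  rw [Set.ncard_union_eq hdisj, (hf.injOn.mono hYD).ncard_image]
  have hD := Set.ncard_sdiff_add_ncard_of_subset hXD
  have hX := Set.ncard_sdiff_add_ncard_of_subset hYX
  omega

end IsPrivateMap

def exchangeSet (G : SimpleGraph V) (D : Set V) (w : V) : Set V :=
  {x ∈ D | ∃ z ∈ D, z ∈ insert w (G.neighborSet w) ∧ (G.deleteIncidenceSet w).Reachable z x}

section exchangeSet

variable {D : Set V} {w x u : V} {f : V → V}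

lemma exchangeSet_subset : exchangeSet G D w ⊆ D := Set.sep_subset _ _

lemma mem_exchangeSet_of_mem_closedNbhd (hu : u ∈ D) (huw : u ∈ insert w (G.neighborSet w)) :
    u ∈ exchangeSet G D w :=
  ⟨hu, u, hu, huw, .refl u⟩

lemma mem_exchangeSet_of_reachable (hx : x ∈ exchangeSet G D w) (hu : u ∈ D)
    (h : u ≠ w → (G.deleteIncidenceSet w).Reachable x u) : u ∈ exchangeSet G D w := by
  obtain rfl | huw := eq_or_ne u w
  · exact mem_exchangeSet_of_mem_closedNbhd hu (Set.mem_insert u _)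
  · obtain ⟨-, z, hz, hzw, hzx⟩ := hx
    exact ⟨hu, z, hz, hzw, hzx.trans (h huw)⟩

namespace IsPrivateMap

lemma ne_of_apply_notMem_closedNbhd (hf : IsPrivateMap G D f) (hx : x ∈ D)
    (hfx : f x ∉ insert w (G.neighborSet w)) : x ≠ w := by
  rintro rfl
  exact hfx (Set.mem_insert_of_mem _ (hf.adj hx).symm)

lemma mem_exchangeSet_of_adj (hf : IsPrivateMap G D f) (hx : x ∈ exchangeSet G D w)
    (hfx : f x ∉ insert w (G.neighborSet w)) (hu : u ∈ D) (hux : G.Adj u x) :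
    u ∈ exchangeSet G D w :=
  mem_exchangeSet_of_reachable hx hu fun huw => (deleteIncidenceSet_adj.mpr
    ⟨hux.symm, hf.ne_of_apply_notMem_closedNbhd hx.1 hfx, huw⟩).reachable

lemma mem_exchangeSet_of_adj_apply (hf : IsPrivateMap G D f) (hx : x ∈ exchangeSet G D w)
    (hfx : f x ∉ insert w (G.neighborSet w)) (hu : u ∈ D) (hux : G.Adj (f u) (f x)) :
    u ∈ exchangeSet G D w := by
  have hxw : x ≠ w := hf.ne_of_apply_notMem_closedNbhd hx.1 hfx
  have hfxw : f x ≠ w := fun h => hfx (h ▸ Set.mem_insert _ _)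
  have hfuw : f u ≠ w := fun h => hfx (Set.mem_insert_of_mem _ (h ▸ hux))
  refine mem_exchangeSet_of_reachable hx hu fun huw => ?_
  have h₁ := deleteIncidenceSet_adj.mpr ⟨(hf.adj hx.1).symm, hxw, hfxw⟩
  have h₂ := deleteIncidenceSet_adj.mpr ⟨hux.symm, hfxw, hfuw⟩
  have h₃ := deleteIncidenceSet_adj.mpr ⟨hf.adj hu, hfuw, huw⟩
  exact h₁.reachable.trans (h₂.reachable.trans h₃.reachable)

theorem subsingleton_exchangeSet_apply_mem_closedNbhd (hG : G.IsAcyclic)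
    (hf : IsPrivateMap G D f) :
    {x ∈ exchangeSet G D w | f x ∈ insert w (G.neighborSet w)}.Subsingleton := by
  by_cases hwD : w ∈ D
  · refine (Set.subsingleton_singleton (a := w)).anti fun x ⟨hx, hfx⟩ => ?_
    have hfxw : f x ≠ w := fun h => (hf x hx.1).1 (h ▸ hwD)
    exact (hf.eq_of_adj hx.1 hwD (hfx.resolve_left hfxw).symm).symm
  · have happly : ∀ x ∈ exchangeSet G D w, f x ∈ insert w (G.neighborSet w) → f x = w := by
      rintro x ⟨hx, z, hz, hzw, hzx⟩ hfx
      by_contra hfxw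
      have hxfx : (G.deleteIncidenceSet w).Adj x (f x) :=
        deleteIncidenceSet_adj.mpr ⟨(hf.adj hx).symm, fun h => hwD (h ▸ hx), hfxw⟩
      exact hG.not_reachable_deleteIncidenceSet (hzw.resolve_left fun h => hwD (h ▸ hz))
        (hfx.resolve_left hfxw) (fun h => (hf x hx).1 (h ▸ hz)) (hzx.trans hxfx.reachable)
    exact fun x ⟨hx, hfx⟩ y ⟨hy, hfy⟩ =>
      hf.injOn hx.1 hy.1 ((happly x hx hfx).trans (happly y hy hfy).symm)

end IsPrivateMap

end exchangeSet

theorem SuperDomSet.exists_closedNbhd_subset [Finite V] (hG : G.IsAcyclic) {S : Set V}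
    (hS : SuperDomSet G S) (w : V) :
    ∃ S', SuperDomSet G S' ∧ insert w (G.neighborSet w) ⊆ S' ∧ S'.ncard ≤ S.ncard + 1 := by
  obtain ⟨f, hf⟩ := SuperDomSet.exists_isPrivateMap (D := Sᶜ) (by rwa [compl_compl])
  set E := exchangeSet G Sᶜ w
  set Y := {x ∈ E | f x ∉ insert w (G.neighborSet w)}
  have hYE : Y ⊆ E := Set.sep_subset _ _
  refine ⟨((Sᶜ \ E) ∪ f '' Y)ᶜ, hf.superDomSet_compl_exchange exchangeSet_subset hYE
    (fun x hx _ hu hux => hf.mem_exchangeSet_of_adj hx.1 hx.2 hu hux)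
    (fun x hx _ hu hux => hf.mem_exchangeSet_of_adj_apply hx.1 hx.2 hu hux), ?_, ?_⟩
  · rintro z hz (⟨hzS, hzE⟩ | ⟨y, hy, rfl⟩)
    · exact hzE (mem_exchangeSet_of_mem_closedNbhd hzS hz)
    · exact hy.2 hz
  · have hbad : (E \ Y).ncard ≤ 1 :=
      Set.ncard_le_one_iff_subsingleton.mpr <|
        (hf.subsingleton_exchangeSet_apply_mem_closedNbhd hG).anti
          fun x hx => ⟨hx.1, not_not.mp fun h => hx.2 ⟨hx.1, h⟩⟩
    have hD := hf.ncard_exchange_add_ncard_sdiff (X := E) exchangeSet_subset hYE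
    have hS := Set.ncard_add_ncard_compl S
    have hS' := Set.ncard_add_ncard_compl ((Sᶜ \ E) ∪ f '' Y)ᶜ
    rw [compl_compl] at hS'
    omega

theorem SuperDomSet.sdiff_leaf {S : Set V} {v w : V} (hS : SuperDomSet G S)
    (hv : G.neighborSet v = {w}) (hw : insert w (G.neighborSet w) ⊆ S) :
    SuperDomSet G (S \ {v}) := by
  have hadj_v {x : V} : G.Adj x v ↔ x = w := by
    rw [adj_comm, ← mem_neighborSet, hv, Set.mem_singleton_iff]
  intro u hu
  simp only [Set.mem_compl_iff, Set.mem_sdiff, Set.mem_singleton_iff, not_and, not_not] at hu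
  obtain rfl | huv := eq_or_ne u v
  · refine ⟨w, ⟨hw (Set.mem_insert w _), (hadj_v.mpr rfl).ne⟩, ?_⟩
    ext z
    simp only [Set.mem_inter_iff, mem_neighborSet, Set.mem_compl_iff, Set.mem_sdiff,
      Set.mem_singleton_iff, not_and, not_not]
    constructor
    · rintro ⟨hz, hzS⟩
      exact hzS (hw (Set.mem_insert_of_mem w hz))
    · rintro rfl
      exact ⟨hadj_v.mpr rfl, fun _ => rfl⟩
  · have huS : u ∉ S := fun h => huv (hu h)
    have huw : u ≠ w := fun h => huS (h ▸ hw (Set.mem_insert w _))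
    obtain ⟨x, hxS, hx⟩ := hS u huS
    have hux : u ∈ G.neighborSet x ∩ Sᶜ := by rw [hx]; rfl
    have hxw : x ≠ w := fun h => hux.2 (hw (Set.mem_insert_of_mem w (h ▸ hux.1)))
    refine ⟨x, ⟨hxS, fun hxv => huw ?_⟩, ?_⟩
    · subst hxv
      exact hadj_v.mp hux.1.symm
    ext z
    simp only [Set.mem_inter_iff, Set.mem_compl_iff, Set.mem_sdiff, Set.mem_singleton_iff,
      not_and, not_not]
    constructor
    · rintro ⟨hz, hzS⟩
      by_cases hzS' : z ∈ S
      · exact absurd (hadj_v.mp (hzS hzS' ▸ hz)) hxw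
      · have h : z ∈ G.neighborSet x ∩ Sᶜ := ⟨hz, hzS'⟩
        rwa [hx] at h
    · rintro rfl
      exact ⟨hux.1, fun h => absurd h hux.2⟩

theorem exists_min_superDomSet_avoiding_leaf_general {V : Type} [Fintype V]
    (T : SimpleGraph V) (hT : T.IsTree)
    (v : V) (hv : IsLeaf T v) :
    ∃ S : Set V, SuperDomSet T S ∧ S.ncard = superDomNum T ∧ v ∉ S := by
  obtain ⟨w, hw⟩ := Set.ncard_eq_one.mp hv
  have hwv : v ∈ T.neighborSet w := by
    rw [mem_neighborSet, adj_comm, ← mem_neighborSet, hw]; rfl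
  obtain ⟨S₀, hS₀, hS₀_card⟩ := exists_superDomSet_ncard_eq_superDomNum T
  obtain ⟨S, hS, hwS, hS_card⟩ := hS₀.exists_closedNbhd_subset hT.isAcyclic w
  have hvS : v ∈ S := hwS (Set.mem_insert_of_mem w hwv)
  have hS' := hS.sdiff_leaf hw hwS
  refine ⟨S \ {v}, hS', le_antisymm ?_ (superDomNum_le hS'), fun h => h.2 rfl⟩
  rw [Set.ncard_sdiff_singleton_of_mem hvS]
  omega

/-- For every leaf `v` of a tree of order at least 2 there is a minimum super dominating
set avoiding `v`. -/
theorem exists_min_superDomSet_avoiding_leaf {V : Type} [Fintype V]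
    (T : SimpleGraph V) (hT : T.IsTree) (hcard : 2 ≤ Fintype.card V)
    (v : V) (hv : IsLeaf T v) :
    ∃ S : Set V, SuperDomSet T S ∧ S.ncard = superDomNum T ∧ v ∉ S :=
  exists_min_superDomSet_avoiding_leaf_general T hT v hv
end

section
/- For every tree T of order at least 3, γ_t(T) ≤ (4/3)·γ_sp(T), i.e., 3·γ_t(T) ≤ 4·γ_sp(T). -/
/-!
A super dominating set `S` injects its complement into itself (each `u ∉ S` is the unique
outside neighbour of some `v ∈ S`), so `γ_sp(T) ≥ n/2`.

For `γ_t(T) ≤ 2n/3`, root `T` at a vertex `r` and let `d` be the distance to `r`. For each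
residue `k` mod 3, the vertices with `d ≢ k` totally dominate every vertex `v ≠ r` except the
childless ones whose parent has `d ≡ k`; trading those for their parents loses nothing in size.
Choosing `r` at distance two from a leaf `x`, the parent of `x` lies in every such set, so `r` is
dominated as well. The three candidates have total size at most `2n`, so one of them has size
at most `2n/3`.
-/

open SimpleGraph

theorem Set.ncard_sdiff_union_image_le {α : Type*} {s t : Set α} (f : α → α) (hs : s.Finite)
    (hts : t ⊆ s) : (s \ t ∪ f '' t).ncard ≤ s.ncard :=
  calc (s \ t ∪ f '' t).ncard ≤ (s \ t).ncard + (f '' t).ncard := Set.ncard_union_le _ _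
    _ ≤ (s \ t).ncard + t.ncard := Nat.add_le_add_left (Set.ncard_image_le (hs.subset hts)) _
    _ = s.ncard := Set.ncard_sdiff_add_ncard_of_subset hts hs

theorem exists_three_mul_ncard_mod_three_ne_le {α : Type*} [Finite α] (f : α → ℕ) :
    ∃ k, 3 * {a | f a % 3 ≠ k}.ncard ≤ 2 * Nat.card α := by
  have hcompl (k : ℕ) : {a | f a % 3 = k}.ncard + {a | f a % 3 ≠ k}.ncard = Nat.card α :=
    Set.ncard_add_ncard_compl {a | f a % 3 = k}
  have hsplit : {a | f a % 3 ≠ 0} = {a | f a % 3 = 1} ∪ {a | f a % 3 = 2} := by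
    ext a; simp only [Set.mem_ofPred_eq, Set.mem_union]; omega
  have hdisj : Disjoint {a | f a % 3 = 1} {a | f a % 3 = 2} :=
    Set.disjoint_left.mpr fun a h1 h2 => by simp_all
  have hsum := Set.ncard_union_eq hdisj
  rw [← hsplit] at hsum
  by_contra! h
  have := h 0; have := h 1; have := h 2
  have := hcompl 0; have := hcompl 1; have := hcompl 2
  omega

theorem SuperDomSet.ncard_compl_le {V : Type} [Finite V] {G : SimpleGraph V} {S : Set V}
    (hS : SuperDomSet G S) : Sᶜ.ncard ≤ S.ncard := by
  choose! g hgS hg using hS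
  refine Set.ncard_le_ncard_of_injOn g hgS (fun u hu u' hu' huu' => ?_)
  have := (hg u hu).symm.trans (huu' ▸ hg u' hu')
  exact Set.singleton_eq_singleton_iff.mp this

theorem card_le_two_mul_superDomNum {V : Type} [Finite V] (G : SimpleGraph V) :
    Nat.card V ≤ 2 * superDomNum G := by
  have hne : {n | ∃ S : Set V, SuperDomSet G S ∧ S.ncard = n}.Nonempty :=
    ⟨_, Set.univ, fun u hu => absurd (Set.mem_univ u) hu, rfl⟩
  obtain ⟨S, hS, hcard⟩ := Nat.sInf_mem hne
  have := Set.ncard_add_ncard_compl S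
  have := hS.ncard_compl_le
  rw [superDomNum, ← hcard]
  omega

theorem totalDomNum_le_ncard {V : Type} {G : SimpleGraph V} {S : Set V}
    (hS : TotalDomSet G S) : totalDomNum G ≤ S.ncard :=
  Nat.sInf_le ⟨S, hS, rfl⟩

namespace SimpleGraph

variable {V : Type*} {G : SimpleGraph V}

theorem Connected.exists_adj_dist_add_one_eq (hG : G.Connected) {r v : V} (hv : v ≠ r) :
    ∃ p, G.Adj p v ∧ G.dist r p + 1 = G.dist r v := by
  obtain ⟨q, hq⟩ := hG.exists_walk_length_eq_dist v r
  obtain ⟨p, hvp, q', rfl⟩ := Walk.exists_eq_cons_of_ne hv q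
  refine ⟨p, hvp.symm, ?_⟩
  have hle : G.dist p r ≤ q'.length := dist_le q'
  have htri : G.dist v r ≤ G.dist v p + G.dist p r := hG.dist_triangle
  rw [Walk.length_cons] at hq
  rw [dist_eq_one_iff_adj.mpr hvp] at htri
  rw [dist_comm, dist_comm (u := r)]
  omega

theorem Connected.exists_dist_eq_two_of_adj_unique [Fintype V] (hG : G.Connected)
    (hV : 3 ≤ Fintype.card V) {x c : V} (hxc : G.Adj x c) (hc : ∀ w, G.Adj x w → w = c) :
    ∃ r, G.Adj r c ∧ G.dist r x = 2 := by
  classical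
  obtain ⟨z, -, hz⟩ := Finset.exists_mem_notMem_of_card_lt_card (s := {x, c})
    (t := Finset.univ) ((Finset.card_le_two).trans_lt hV)
  simp only [Finset.mem_insert, Finset.mem_singleton, not_or] at hz
  obtain ⟨r, hrc, hr⟩ := hG.exists_adj_dist_add_one_eq (r := z) (Ne.symm hz.2)
  have hrx : r ≠ x := by
    rintro rfl
    obtain ⟨p, hpx, hp⟩ := hG.exists_adj_dist_add_one_eq (r := z) (Ne.symm hz.1)
    rw [hc p hpx.symm] at hp
    omega
  refine ⟨r, hrc, le_antisymm ?_ ?_⟩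
  · calc G.dist r x ≤ G.dist r c + G.dist c x := hG.dist_triangle
      _ = 2 := by rw [dist_eq_one_iff_adj.mpr hrc, dist_eq_one_iff_adj.mpr hxc.symm]
  · exact hG.one_lt_dist_of_ne_of_not_adj hrx
      fun hrx' => hrc.ne (hc r hrx'.symm)

end SimpleGraph

section DepthCover

variable {V : Type} {G : SimpleGraph V} {r x : V} {par : V → V} {k : ℕ}

/-- `(G.dist r v + 2) % 3 = k` says that the parent of `v`, one step closer to `r`, lies at a
depth `≡ k (mod 3)`. -/
def strandedVertices (G : SimpleGraph V) (r : V) (k : ℕ) : Set V :=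
  {v | v ≠ r ∧ (G.dist r v + 2) % 3 = k ∧ ∀ w, G.Adj v w → G.dist r w ≠ G.dist r v + 1}

def depthCover (G : SimpleGraph V) (r : V) (par : V → V) (k : ℕ) : Set V :=
  {v | G.dist r v % 3 ≠ k} \ strandedVertices G r k ∪ par '' strandedVertices G r k

theorem notMem_strandedVertices_of_adj {v w : V} (h : G.Adj v w)
    (hw : G.dist r w = G.dist r v + 1) : v ∉ strandedVertices G r k :=
  fun hv => hv.2.2 w h hw

theorem totalDomSet_depthCover
    (hpar : ∀ v ≠ r, G.Adj (par v) v ∧ G.dist r (par v) + 1 = G.dist r v)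
    (hx : G.dist r x = 2) (hxc : ∀ w, G.Adj x w → G.dist r w ≠ 3) :
    TotalDomSet G (depthCover G r par k) := by
  have par_mem (v : V) (hv : v ≠ r) (hk : G.dist r (par v) % 3 ≠ k) :
      par v ∈ depthCover G r par k :=
    Or.inl ⟨hk, notMem_strandedVertices_of_adj (hpar v hv).1 (hpar v hv).2.symm⟩
  intro v
  by_cases hvr : v = r
  · subst hvr
    have hxr : x ≠ v := by rintro rfl; simp at hx
    obtain ⟨-, hd⟩ := hpar x hxr
    refine ⟨par x, ?_, (dist_eq_one_iff_adj.mp (by omega)).symm⟩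
    by_cases hk : k = 1
    · exact Or.inr ⟨x, ⟨hxr, by omega, by rwa [hx]⟩, rfl⟩
    · exact par_mem x hxr (by omega)
  obtain ⟨hadj, hd⟩ := hpar v hvr
  by_cases hk : G.dist r (par v) % 3 = k
  · by_cases hchild : ∃ w, G.Adj v w ∧ G.dist r w = G.dist r v + 1
    · obtain ⟨w, hvw, hw⟩ := hchild
      have hwk : G.dist r w % 3 ≠ k := by omega
      exact ⟨w, Or.inl ⟨hwk, fun hw' => by have := hw'.2.1; omega⟩, hvw.symm⟩
    · push Not at hchild
      exact ⟨par v, Or.inr ⟨v, ⟨hvr, by omega, hchild⟩, rfl⟩, hadj⟩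
  · exact ⟨par v, par_mem v hvr hk, hadj⟩

theorem ncard_depthCover_le [Finite V] :
    (depthCover G r par k).ncard ≤ {v | G.dist r v % 3 ≠ k}.ncard :=
  Set.ncard_sdiff_union_image_le par (Set.toFinite _) fun v hv => by
    have := hv.2.1
    simp only [Set.mem_ofPred_eq]
    omega

end DepthCover

theorem SimpleGraph.IsTree.three_mul_totalDomNum_le {V : Type} [Fintype V] {G : SimpleGraph V}
    (hG : G.IsTree) (hV : 3 ≤ Fintype.card V) : 3 * totalDomNum G ≤ 2 * Fintype.card V := by
  classical
  have : Nontrivial V := Fintype.one_lt_card_iff_nontrivial.mp (by omega)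
  obtain ⟨x, hx⟩ := hG.exists_vert_degree_one_of_nontrivial
  obtain ⟨c, hxc, hc⟩ := degree_eq_one_iff_existsUnique_adj.mp hx
  obtain ⟨r, hrc, hrx⟩ := hG.connected.exists_dist_eq_two_of_adj_unique hV hxc hc
  choose! par hpar using fun v (hv : v ≠ r) => hG.connected.exists_adj_dist_add_one_eq hv
  have hxleaf (w : V) (hxw : G.Adj x w) : G.dist r w ≠ 3 := by
    rw [hc w hxw, dist_eq_one_iff_adj.mpr hrc]
    omega
  obtain ⟨k, hk⟩ := exists_three_mul_ncard_mod_three_ne_le (G.dist r)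
  calc 3 * totalDomNum G ≤ 3 * (depthCover G r par k).ncard :=
        Nat.mul_le_mul_left 3 (totalDomNum_le_ncard (totalDomSet_depthCover hpar hrx hxleaf))
    _ ≤ 3 * {v | G.dist r v % 3 ≠ k}.ncard := Nat.mul_le_mul_left 3 ncard_depthCover_le
    _ ≤ 2 * Fintype.card V := Nat.card_eq_fintype_card (α := V) ▸ hk

/-- For every tree of order at least 3, `γ_t(T)/γ_sp(T) ≤ 4/3`. -/
theorem totalDomNum_le_superDomNum {V : Type} [Fintype V] (T : SimpleGraph V)
    (hT : T.IsTree) (hcard : 3 ≤ Fintype.card V) :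
    3 * totalDomNum T ≤ 4 * superDomNum T := by
  have hsp := card_le_two_mul_superDomNum T
  rw [Nat.card_eq_fintype_card] at hsp
  have := hT.three_mul_totalDomNum_le hcard
  omega
end

section
/- Let T be a tree of diameter at least 4, let P = u_1u_2…u_t be a longest path in T, and let T' be obtained from T by subdividing the edges u_2u_3 and u_3u_4. Then γ_sp(T') ≥ γ_sp(T) + 1. -/
open SimpleGraph

/-- The graph obtained from `G` by subdividing each edge in `F` once: for `e ∈ F`
the edge is removed and replaced by a path of length 2 through the new vertex `e`. -/
def subdivide {V : Type} (G : SimpleGraph V) (F : Set (Sym2 V)) :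
    SimpleGraph (V ⊕ F) where
  Adj x y :=
    match x, y with
    | Sum.inl a, Sum.inl b => G.Adj a b ∧ s(a, b) ∉ F
    | Sum.inl a, Sum.inr e => a ∈ (e : Sym2 V)
    | Sum.inr e, Sum.inl a => a ∈ (e : Sym2 V)
    | Sum.inr _, Sum.inr _ => False
  symm := by
    constructor
    rintro (a | e) (b | f) h
    · exact ⟨h.1.symm, by rw [Sym2.eq_swap]; exact h.2⟩
    · exact h
    · exact h
    · exact h
  loopless := by
    constructor
    rintro (a | e) h
    · exact G.loopless.irrefl a h.1
    · exact h


/-!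
Write `U = Dᶜ` for the complement of a super dominating set `D`: every `u ∈ U` has a *private
witness* `w ∉ U` whose only neighbour in `U` is `u`, and `γ_sp(G) = |V(G)| - max |U|`. As `T'` has
two more vertices than `T`, it suffices to turn every such `U'` for `T'` into a `U` for `T` with
`|U'| ≤ |U| + 1`.

Write `v₀v₁v₂v₃` for `u₁u₂u₃u₄`, `x` and `y` for the vertices subdividing `v₁v₂` and `v₂v₃`, and
`S` for `v₁` with its neighbours other than `v₂`, which are leaves as the path is longest. A leaf in
`U'` is witnessed by its support, so `U'` meets `S ∪ {x}` at most once unless `v₂` witnesses `x`.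
Private witnesses of `U'` outside `S` keep working in `T` as long as, in the new set, `v₂` sees
neither `v₁` nor `v₃` and `v₃` does not see `v₂`. If `v₂` witnesses some vertex of `U'`, drop that
vertex: then `v₂` has no neighbour left in `U'`, and `{v₀} ∪ (U' ∩ V \ S)` works, with `v₁`
witnessing `v₀` and `v₂` taking over from `y`. Otherwise `{v₁} ∪ (U' ∩ V \ S)`, with `v₀`
witnessing `v₁`, works if `y ∈ U'`, and after removing `v₂` (if `v₂ ∈ U'`) or `v₃` (if not)
when `y ∉ U'`.
-/

open SimpleGraph Sum

section PrivateWitness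

variable {W : Type} {G : SimpleGraph W} {U U₁ : Set W} {w u ℓ : W}

def IsPrivateWitness (G : SimpleGraph W) (U : Set W) (w u : W) : Prop :=
  w ∉ U ∧ G.neighborSet w ∩ U = {u}

def HasPrivateWitnesses (G : SimpleGraph W) (U : Set W) : Prop :=
  ∀ u ∈ U, ∃ w, IsPrivateWitness G U w u

theorem IsPrivateWitness.mem (h : IsPrivateWitness G U w u) : u ∈ U :=
  (h.2.symm.subset rfl).2

theorem IsPrivateWitness.adj (h : IsPrivateWitness G U w u) : G.Adj w u :=
  (h.2.symm.subset rfl).1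

theorem IsPrivateWitness.eq_of_adj (h : IsPrivateWitness G U w u) {c : W} (hc : c ∈ U)
    (hwc : G.Adj w c) : c = u :=
  h.2.subset ⟨hwc, hc⟩

theorem IsPrivateWitness.of_forall (hw : w ∉ U) (hu : u ∈ U) (hwu : G.Adj w u)
    (h : ∀ c ∈ U, G.Adj w c → c = u) : IsPrivateWitness G U w u :=
  ⟨hw, Set.eq_singleton_iff_unique_mem.mpr ⟨⟨hwu, hu⟩, fun c hc => h c hc.2 hc.1⟩⟩

theorem IsPrivateWitness.of_leaf (hℓ : ∀ c, G.Adj ℓ c → c = u) (hℓu : G.Adj ℓ u)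
    (hu : u ∈ U) (hℓU : ℓ ∉ U) : IsPrivateWitness G U ℓ u :=
  .of_forall hℓU hu hℓu fun c _ hc => hℓ c hc

theorem HasPrivateWitnesses.isPrivateWitness_of_forall (h : HasPrivateWitnesses G U)
    (hu : u ∈ U) (hw : ∀ z, IsPrivateWitness G U z u → z = w) : IsPrivateWitness G U w u := by
  obtain ⟨z, hz⟩ := h u hu
  exact hw z hz ▸ hz

theorem HasPrivateWitnesses.anti (h : HasPrivateWitnesses G U) (hsub : U₁ ⊆ U) :
    HasPrivateWitnesses G U₁ := by
  intro u hu
  obtain ⟨w, hw⟩ := h u (hsub hu)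
  exact ⟨w, .of_forall (fun hw' => hw.1 (hsub hw')) hu hw.adj
    fun c hc hwc => hw.eq_of_adj (hsub hc) hwc⟩

theorem superDomSet_compl_iff_s16 : SuperDomSet G Uᶜ ↔ HasPrivateWitnesses G U := by
  simp [SuperDomSet, HasPrivateWitnesses, IsPrivateWitness]

theorem HasPrivateWitnesses.superDomNum_add_ncard_le [Finite W]
    (h : HasPrivateWitnesses G U) : superDomNum G + U.ncard ≤ Nat.card W := by
  have hle : superDomNum G ≤ Uᶜ.ncard :=
    Nat.sInf_le ⟨Uᶜ, superDomSet_compl_iff_s16.mpr h, rfl⟩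
  have := Set.ncard_add_ncard_compl U
  omega

theorem exists_hasPrivateWitnesses_superDomNum_add_ncard_eq [Finite W] (G : SimpleGraph W) :
    ∃ U, HasPrivateWitnesses G U ∧ superDomNum G + U.ncard = Nat.card W := by
  obtain ⟨S, hS, hcard⟩ :
      superDomNum G ∈ {n | ∃ S : Set W, SuperDomSet G S ∧ S.ncard = n} :=
    Nat.sInf_mem ⟨_, Set.univ, fun u hu => absurd (Set.mem_univ u) hu, rfl⟩
  refine ⟨Sᶜ, superDomSet_compl_iff_s16.mp (by rwa [compl_compl]), ?_⟩
  have := Set.ncard_add_ncard_compl S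
  omega

end PrivateWitness

structure IsPendantStarPath {V : Type} (T : SimpleGraph V) (v0 v1 v2 v3 : V) : Prop where
  adj01 : T.Adj v0 v1
  adj12 : T.Adj v1 v2
  adj23 : T.Adj v2 v3
  ne02 : v0 ≠ v2
  ne13 : v1 ≠ v3
  leaf : ∀ ℓ, T.Adj v1 ℓ → ℓ ≠ v2 → ∀ c, T.Adj ℓ c → c = v1

namespace SimpleGraph

variable {V : Type} {G : SimpleGraph V} {a b c w : V}

theorem IsAcyclic.eq_snd_of_adj_of_mem_support (hG : G.IsAcyclic) {p : G.Walk a b}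
    (hp : p.IsPath) (hac : G.Adj a c) (hc : c ∈ p.support) : c = p.snd := by
  classical
  have htake : p.takeUntil c hc = .cons hac .nil :=
    congrArg Subtype.val ((hG.subsingleton_path a c).elim
      ⟨_, hp.takeUntil hc⟩ ⟨_, by simp [hac.ne]⟩)
  have := congrArg (·.snd) (p.take_spec hc)
  simp only [htake] at this
  rw [← this]
  simp

theorem IsAcyclic.eq_snd_of_adj_of_forall_length_le (hG : G.IsAcyclic) {p : G.Walk a b}
    (hp : p.IsPath) (hlong : ∀ {c d : V} (q : G.Walk c d), q.IsPath → q.length ≤ p.length)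
    (hac : G.Adj a c) : c = p.snd := by
  by_cases hc : c ∈ p.support
  · exact hG.eq_snd_of_adj_of_mem_support hp hac hc
  · have := hlong (.cons hac.symm p) (hp.cons hc)
    simp at this

/-- Replacing the first vertex of a longest path by another neighbour `w` of the second one gives
another longest path, so `w` is a leaf as well. -/
theorem IsAcyclic.eq_snd_of_adj_of_adj_snd (hG : G.IsAcyclic) {p : G.Walk a b}
    (hp : p.IsPath) (hlong : ∀ {c d : V} (q : G.Walk c d), q.IsPath → q.length ≤ p.length)
    (hw : G.Adj p.snd w) (hw2 : w ≠ p.getVert 2) (hwc : G.Adj w c) : c = p.snd := by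
  have hwt : w ∉ p.tail.support := fun h =>
    hw2 (by simpa [Walk.getVert_tail] using hG.eq_snd_of_adj_of_mem_support hp.tail hw h)
  have hlen : p.length ≤ (Walk.cons hw.symm p.tail).length := by
    rw [Walk.length_cons]
    by_cases hn : p.Nil
    · simp [hn.length_eq_zero]
    · rw [Walk.length_tail_add_one hn]
  simpa using hG.eq_snd_of_adj_of_forall_length_le (hp.tail.cons hwt)
    (fun q hq => (hlong q hq).trans hlen) hwc

theorem IsTree.isPendantStarPath (hG : G.IsTree) {p : G.Walk a b} (hp : p.IsPath)
    (hlong : ∀ {c d : V} (q : G.Walk c d), q.IsPath → q.length ≤ p.length)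
    (h3 : 3 ≤ p.length) :
    IsPendantStarPath G (p.getVert 0) (p.getVert 1) (p.getVert 2) (p.getVert 3) where
  adj01 := p.adj_getVert_succ (by omega)
  adj12 := p.adj_getVert_succ (by omega)
  adj23 := p.adj_getVert_succ (by omega)
  ne02 h := by
    simpa using hp.getVert_injOn (show 0 ≤ p.length by omega) (show 2 ≤ p.length by omega) h
  ne13 h := by
    simpa using hp.getVert_injOn (show 1 ≤ p.length by omega) (show 3 ≤ p.length by omega) h
  leaf _ hℓ hℓ2 _ hc := hG.isAcyclic.eq_snd_of_adj_of_adj_snd hp hlong hℓ hℓ2 hc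

end SimpleGraph

section Subdivision

variable {V : Type} {T : SimpleGraph V} {F : Set (Sym2 V)} {a : V} {e : F}

@[simp] theorem subdivide_adj_inl_inr :
    (subdivide T F).Adj (inl a) (inr e) ↔ a ∈ (e : Sym2 V) := Iff.rfl

@[simp] theorem subdivide_adj_inr_inl :
    (subdivide T F).Adj (inr e) (inl a) ↔ a ∈ (e : Sym2 V) := Iff.rfl

end Subdivision

def pendantStar {V : Type} (T : SimpleGraph V) (v1 v2 : V) : Set V :=
  insert v1 {c | T.Adj v1 c ∧ c ≠ v2}

theorem mem_pendantStar_self {V : Type} {T : SimpleGraph V} {v1 v2 : V} :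
    v1 ∈ pendantStar T v1 v2 :=
  Set.mem_insert _ _

namespace IsPendantStarPath

variable {V : Type} {T : SimpleGraph V} {v0 v1 v2 v3 : V}

local notation "V'" => V ⊕ ({s(v1, v2), s(v2, v3)} : Set (Sym2 V))
local notation "T'" => subdivide T {s(v1, v2), s(v2, v3)}
local notation "S" => pendantStar T v1 v2
local notation "𝐱" => (inr (Subtype.mk s(v1, v2) (Set.mem_insert _ _)) : V')
local notation "𝐲" => (inr (Subtype.mk s(v2, v3) (Set.mem_insert_of_mem _ rfl)) : V')

variable {U' : Set (V ⊕ ({s(v1, v2), s(v2, v3)} : Set (Sym2 V)))} {U : Set V} {u w : V}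

theorem ne12 (h : IsPendantStarPath T v0 v1 v2 v3) : v1 ≠ v2 := h.adj12.ne

theorem not_adj13 (h : IsPendantStarPath T v0 v1 v2 v3) : ¬T.Adj v1 v3 := fun h13 =>
  h.ne12 (h.leaf v3 h13 h.adj23.ne' v2 h.adj23.symm).symm

theorem eq_v1_of_adj_v0 (h : IsPendantStarPath T v0 v1 v2 v3) {c : V} (hc : T.Adj v0 c) :
    c = v1 :=
  h.leaf v0 h.adj01.symm h.ne02 c hc

theorem v0_mem_pendantStar (h : IsPendantStarPath T v0 v1 v2 v3) : v0 ∈ S :=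
  Or.inr ⟨h.adj01.symm, h.ne02⟩

theorem eq_of_adj_of_mem_of_not_mem (h : IsPendantStarPath T v0 v1 v2 v3) {c : V}
    (hwc : T.Adj w c) (hc : c ∈ S) (hw : w ∉ S) : w = v2 ∧ c = v1 := by
  rcases hc with rfl | ⟨hc, hc2⟩
  · exact ⟨by_contra fun hw2 => hw (Or.inr ⟨hwc.symm, hw2⟩), rfl⟩
  · exact absurd (h.leaf c hc hc2 w hwc.symm ▸ mem_pendantStar_self) hw

theorem mem_pendantStar_of_adj_inl (h : IsPendantStarPath T v0 v1 v2 v3)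
    (hwu : (T').Adj (inl w) (inl u)) (hw : w ∈ S) : u ∈ S := by
  rcases hw with rfl | ⟨hw, hw2⟩
  · exact Or.inr ⟨hwu.1, by rintro rfl; exact hwu.2 (Set.mem_insert _ _)⟩
  · exact h.leaf w hw hw2 u hwu.1 ▸ mem_pendantStar_self

theorem eq_inl_v1_of_adj (h : IsPendantStarPath T v0 v1 v2 v3) {ℓ : V} (hℓ : ℓ ∈ S)
    (hℓ1 : ℓ ≠ v1) {z : V'} (hz : (T').Adj (inl ℓ) z) : z = inl v1 := by
  obtain ⟨hℓ, hℓ2⟩ : T.Adj v1 ℓ ∧ ℓ ≠ v2 := hℓ.resolve_left hℓ1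
  rcases z with c | ⟨e, he⟩
  · exact congrArg inl (h.leaf ℓ hℓ hℓ2 c hz.1)
  · simp only [Set.mem_insert_iff, Set.mem_singleton_iff] at he
    rcases he with rfl | rfl <;> simp only [subdivide_adj_inl_inr, Sym2.mem_iff] at hz
    · exact (hz.elim hℓ1 hℓ2).elim
    · exact absurd (hz.resolve_left hℓ2 ▸ hℓ) h.not_adj13

theorem adj_inl_v2 (h : IsPendantStarPath T v0 v1 v2 v3) {c : V} (hc : T.Adj v2 c)
    (hc1 : c ≠ v1) (hc3 : c ≠ v3) : (T').Adj (inl v2) (inl c) :=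
  ⟨hc, by simp [hc1, hc3, h.ne12.symm, h.adj23.ne]⟩

theorem adj_inl_v3 (h : IsPendantStarPath T v0 v1 v2 v3) {c : V} (hc : T.Adj v3 c)
    (hc2 : c ≠ v2) : (T').Adj (inl v3) (inl c) :=
  ⟨hc, by simp [hc2, h.ne13.symm, h.adj23.ne.symm]⟩

theorem isPrivateWitness_inl_v1 (h : IsPendantStarPath T v0 v1 v2 v3)
    (hU' : HasPrivateWitnesses T' U') (hx : 𝐱 ∈ U' → ¬IsPrivateWitness T' U' (inl v2) 𝐱)
    {z : V'} (hz : z ∈ U') (hzS : z ∈ inl '' S ∪ {𝐱}) (hz1 : z ≠ inl v1) :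
    IsPrivateWitness T' U' (inl v1) z := by
  refine hU'.isPrivateWitness_of_forall hz fun z' hz' => ?_
  rcases hzS with ⟨ℓ, hℓ, rfl⟩ | rfl
  · exact h.eq_inl_v1_of_adj hℓ (fun e => hz1 (e ▸ rfl)) hz'.adj.symm
  · rcases z' with c | e
    · have : c = v1 ∨ c = v2 := by simpa using hz'.adj
      rcases this with rfl | rfl
      exacts [rfl, absurd hz' (hx hz)]
    · exact (hz'.adj : False).elim

theorem subsingleton_inter_star (h : IsPendantStarPath T v0 v1 v2 v3)
    (hU' : HasPrivateWitnesses T' U') (hx : 𝐱 ∈ U' → ¬IsPrivateWitness T' U' (inl v2) 𝐱) :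
    (U' ∩ (inl '' S ∪ {𝐱})).Subsingleton := by
  intro p ⟨hp, hpS⟩ q ⟨hq, hqS⟩
  rcases eq_or_ne p (inl v1) with rfl | hp1
  · by_contra hpq
    exact (h.isPrivateWitness_inl_v1 hU' hx hq hqS (Ne.symm hpq)).1 hp
  have hwp := h.isPrivateWitness_inl_v1 hU' hx hp hpS hp1
  rcases eq_or_ne q (inl v1) with rfl | hq1
  · exact absurd hq hwp.1
  exact (hwp.eq_of_adj hq (h.isPrivateWitness_inl_v1 hU' hx hq hqS hq1).adj).symm

theorem ncard_le_ncard_preimage_sdiff_add [Finite V] (h : IsPendantStarPath T v0 v1 v2 v3)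
    (hU' : HasPrivateWitnesses T' U') (hx : 𝐱 ∈ U' → ¬IsPrivateWitness T' U' (inl v2) 𝐱) :
    U'.ncard ≤ (inl ⁻¹' U' \ S).ncard + 1 + (U' ∩ {𝐲}).ncard := by
  have hsub : U' ⊆ inl '' (inl ⁻¹' U' \ S) ∪ U' ∩ (inl '' S ∪ {𝐱}) ∪ U' ∩ {𝐲} := by
    rintro (c | ⟨e, he⟩) hz
    · by_cases hc : c ∈ S
      · exact Or.inl (Or.inr ⟨hz, Or.inl ⟨c, hc, rfl⟩⟩)
      · exact Or.inl (Or.inl ⟨c, ⟨hz, hc⟩, rfl⟩)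
    · simp only [Set.mem_insert_iff, Set.mem_singleton_iff] at he
      rcases he with rfl | rfl
      · exact Or.inl (Or.inr ⟨hz, Or.inr rfl⟩)
      · exact Or.inr ⟨hz, rfl⟩
  have hS := Set.ncard_le_one_iff_subsingleton.mpr (h.subsingleton_inter_star hU' hx)
  calc U'.ncard ≤ _ := Set.ncard_le_ncard hsub
    _ ≤ _ := (Set.ncard_union_le _ _).trans (add_le_add_left (Set.ncard_union_le _ _) _)
    _ ≤ _ := by rw [Set.ncard_image_of_injective _ inl_injective]; omega

theorem isPrivateWitness_of_lift (h : IsPendantStarPath T v0 v1 v2 v3)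
    (hUS : ∀ c ∈ U, c ∉ S → inl c ∈ U') (hwS : w ∉ S)
    (hw : IsPrivateWitness T' U' (inl w) (inl u)) (hu : u ∈ U)
    (hv2 : w = v2 → v1 ∉ U ∧ v3 ∉ U) (hv3 : w = v3 → v2 ∉ U) : IsPrivateWitness T U w u := by
  have hlift : ∀ c ∈ U, T.Adj w c → inl c ∈ U' ∧ (T').Adj (inl w) (inl c) := by
    intro c hc hwc
    have hcS : c ∉ S := fun hcS => by
      obtain ⟨rfl, rfl⟩ := h.eq_of_adj_of_mem_of_not_mem hwc hcS hwS
      exact (hv2 rfl).1 hc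
    refine ⟨hUS c hc hcS, hwc, ?_⟩
    simp only [Set.mem_insert_iff, Set.mem_singleton_iff, Sym2.eq_iff]
    rintro ((⟨rfl, rfl⟩ | ⟨rfl, rfl⟩) | (⟨rfl, rfl⟩ | ⟨rfl, rfl⟩))
    · exact hwS mem_pendantStar_self
    · exact hcS mem_pendantStar_self
    · exact (hv2 rfl).2 hc
    · exact hv3 rfl hc
  refine .of_forall (fun hwU => hw.1 (hUS w hwU hwS)) hu hw.adj.1 fun c hc hwc => ?_
  exact inl_injective (hw.eq_of_adj (hlift c hc hwc).1 (hlift c hc hwc).2)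

theorem hasPrivateWitnesses_of_lift (h : IsPendantStarPath T v0 v1 v2 v3)
    (hU' : HasPrivateWitnesses T' U') (hUS : ∀ c ∈ U, c ∉ S → inl c ∈ U')
    (hS : ∀ c ∈ U, c ∈ S → ∃ w, IsPrivateWitness T U w c)
    (h2 : ∀ u ∈ U, IsPrivateWitness T' U' (inl v2) (inl u) → v1 ∉ U ∧ v3 ∉ U)
    (h3 : ∀ u ∈ U, IsPrivateWitness T' U' (inl v3) (inl u) → v2 ∉ U)
    (hx : v2 ∈ U → IsPrivateWitness T' U' 𝐱 (inl v2) → ∃ w, IsPrivateWitness T U w v2)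
    (hy : ∀ u ∈ U, IsPrivateWitness T' U' 𝐲 (inl u) → ∃ w, IsPrivateWitness T U w u) :
    HasPrivateWitnesses T U := by
  intro u hu
  by_cases huS : u ∈ S
  · exact hS u hu huS
  obtain ⟨w', hw'⟩ := hU' (inl u) (hUS u hu huS)
  rcases w' with w | ⟨e, he⟩
  · have hwS : w ∉ S := fun hwS => huS (h.mem_pendantStar_of_adj_inl hw'.adj hwS)
    exact ⟨w, h.isPrivateWitness_of_lift hUS hwS hw' hu (fun hw2 => h2 u hu (hw2 ▸ hw'))
      (fun hw3 => h3 u hu (hw3 ▸ hw'))⟩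
  · simp only [Set.mem_insert_iff, Set.mem_singleton_iff] at he
    rcases he with rfl | rfl
    · have hu12 : u = v1 ∨ u = v2 := by simpa using hw'.adj
      obtain rfl := hu12.resolve_left fun hu1 => huS (hu1 ▸ mem_pendantStar_self)
      exact hx hu hw'
    · exact hy u hu hw'

theorem hasPrivateWitnesses_of_isolated_v2 (h : IsPendantStarPath T v0 v1 v2 v3)
    (hU' : HasPrivateWitnesses T' U') (hv2 : inl v2 ∉ U')
    (hiso : ∀ z ∈ U', ¬(T').Adj (inl v2) z) :
    HasPrivateWitnesses T (insert v0 (inl ⁻¹' U' \ S)) := by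
  have hv2U : v2 ∉ insert v0 (inl ⁻¹' U' \ S) := by
    rintro (h2 | ⟨h2, -⟩)
    exacts [h.ne02 h2.symm, hv2 h2]
  refine h.hasPrivateWitnesses_of_lift hU' ?_ ?_ (fun u _ hw => absurd hw.adj (hiso _ hw.mem))
    (fun _ _ _ => hv2U) (fun h2 => absurd h2 hv2U) fun u hu hw => ?_
  · rintro c (rfl | hc) hcS
    exacts [absurd h.v0_mem_pendantStar hcS, hc.1]
  · rintro c (rfl | hc) hcS
    · refine ⟨v1, .of_forall ?_ (Set.mem_insert _ _) h.adj01.symm fun c hc h1c => ?_⟩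
      · rintro (h10 | ⟨-, h1⟩)
        exacts [h.adj01.ne h10.symm, h1 mem_pendantStar_self]
      rcases hc with rfl | ⟨hcU, hcS⟩
      · rfl
      · obtain rfl : c = v2 := by_contra fun hc2 => hcS (Or.inr ⟨h1c, hc2⟩)
        exact absurd hcU hv2
    · exact absurd hcS hc.2
  · have hu23 : u = v2 ∨ u = v3 := by simpa using hw.adj
    obtain rfl := hu23.resolve_left fun hu2 => hv2U (hu2 ▸ hu)
    refine ⟨v2, .of_forall hv2U hu h.adj23 fun c hc h2c => by_contra fun hc3 => ?_⟩
    rcases hc with rfl | ⟨hcU, hcS⟩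
    · exact h.ne12 (h.eq_v1_of_adj_v0 h2c.symm).symm
    · exact hiso _ hcU (h.adj_inl_v2 h2c (fun hc1 => hcS (hc1 ▸ mem_pendantStar_self)) hc3)

theorem hasPrivateWitnesses_of_subset_insert_v1 (h : IsPendantStarPath T v0 v1 v2 v3)
    (hU' : HasPrivateWitnesses T' U') (hP : ∀ z, ¬IsPrivateWitness T' U' (inl v2) z)
    (hUsub : U ⊆ insert v1 (inl ⁻¹' U' \ S))
    (h3 : ∀ u ∈ U, IsPrivateWitness T' U' (inl v3) (inl u) → v2 ∉ U)
    (hx : v2 ∈ U → IsPrivateWitness T' U' 𝐱 (inl v2) → ∃ w, IsPrivateWitness T U w v2)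
    (hy : ∀ u ∈ U, IsPrivateWitness T' U' 𝐲 (inl u) → ∃ w, IsPrivateWitness T U w u) :
    HasPrivateWitnesses T U := by
  refine h.hasPrivateWitnesses_of_lift hU' (fun c hc hcS => ?_) (fun c hc hcS => ?_)
    (fun u _ hw => absurd hw (hP _)) h3 hx hy
  · rcases hUsub hc with rfl | hc
    exacts [absurd mem_pendantStar_self hcS, hc.1]
  · rcases hUsub hc with rfl | hc
    · refine ⟨v0, .of_leaf (fun c => h.eq_v1_of_adj_v0) h.adj01 hc fun h0 => ?_⟩
      rcases hUsub h0 with h01 | ⟨-, h0S⟩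
      exacts [h.adj01.ne h01, h0S h.v0_mem_pendantStar]
    · exact absurd hcS hc.2

theorem hasPrivateWitnesses_of_mem_y (h : IsPendantStarPath T v0 v1 v2 v3)
    (hU' : HasPrivateWitnesses T' U') (hP : ∀ z, ¬IsPrivateWitness T' U' (inl v2) z)
    (hy : 𝐲 ∈ U') : HasPrivateWitnesses T (insert v1 (inl ⁻¹' U' \ S)) := by
  refine h.hasPrivateWitnesses_of_subset_insert_v1 hU' hP subset_rfl
    (fun u _ hw => absurd (hw.eq_of_adj hy (by simp)) inr_ne_inl) (fun hv2 hx => ?_)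
    (fun u _ hw => absurd hy hw.1)
  obtain ⟨z, hz⟩ := hU' _ hy
  obtain rfl : z = inl v3 := by
    rcases z with c | e
    · have hc : c = v2 ∨ c = v3 := by simpa using hz.adj
      exact hc.elim (fun hc2 => absurd (hc2 ▸ hx.mem) hz.1) (congrArg inl)
    · exact (hz.adj : False).elim
  refine ⟨v3, .of_forall ?_ hv2 h.adj23.symm fun c hc h3c => by_contra fun hc2 => ?_⟩
  · rintro (h31 | ⟨h3U, -⟩)
    exacts [h.ne13 h31.symm, hz.1 h3U]
  · rcases hc with rfl | ⟨hcU, -⟩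
    · exact h.not_adj13 h3c.symm
    · exact inl_ne_inr (hz.eq_of_adj hcU (h.adj_inl_v3 h3c hc2))

theorem hasPrivateWitnesses_of_not_mem_y (h : IsPendantStarPath T v0 v1 v2 v3)
    (hU' : HasPrivateWitnesses T' U') (hP : ∀ z, ¬IsPrivateWitness T' U' (inl v2) z)
    (hy : 𝐲 ∉ U') {d : V} (hd : d = v2 ∧ inl v2 ∈ U' ∨ d = v3 ∧ inl v2 ∉ U') :
    HasPrivateWitnesses T (insert v1 (inl ⁻¹' U' \ S) \ {d}) := by
  have hv2U : v2 ∉ insert v1 (inl ⁻¹' U' \ S) \ {d} := by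
    rintro ⟨h2 | ⟨h2, -⟩, h2d⟩
    · exact h.ne12 h2.symm
    · rcases hd with ⟨rfl, -⟩ | ⟨-, h2'⟩
      exacts [h2d rfl, h2' h2]
  refine h.hasPrivateWitnesses_of_subset_insert_v1 hU' hP Set.sdiff_subset
    (fun _ _ _ => hv2U) (fun h2 => absurd h2 hv2U) fun u hu hw => ?_
  have hu23 : u = v2 ∨ u = v3 := by simpa using hw.adj
  obtain rfl := hu23.resolve_left fun hu2 => hv2U (hu2 ▸ hu)
  obtain ⟨rfl, h2⟩ := hd.resolve_right fun hd3 => hu.2 hd3.1.symm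
  exact absurd (hw.eq_of_adj h2 (by simp)) (by simpa using h.adj23.ne)

theorem exists_hasPrivateWitnesses_ncard_le [Finite V] (h : IsPendantStarPath T v0 v1 v2 v3)
    (hU' : HasPrivateWitnesses T' U') :
    ∃ U, HasPrivateWitnesses T U ∧ U'.ncard ≤ U.ncard + 1 := by
  have hstar : (insert v1 (inl ⁻¹' U' \ S)).ncard = (inl ⁻¹' U' \ S).ncard + 1 :=
    Set.ncard_insert_of_notMem fun h1 => h1.2 mem_pendantStar_self
  by_cases hP : ∃ z, IsPrivateWitness T' U' (inl v2) z
  · obtain ⟨z, hz⟩ := hP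
    have hiso : ∀ z' ∈ U' \ {z}, ¬(T').Adj (inl v2) z' := fun z' hz' hadj =>
      hz'.2 (hz.eq_of_adj hz'.1 hadj)
    have hcard := h.ncard_le_ncard_preimage_sdiff_add (hU'.anti Set.sdiff_subset)
      (fun hx => absurd (by simp) (hiso _ hx))
    rw [Set.inter_singleton_eq_empty.mpr fun hy => hiso _ hy (by simp), Set.ncard_empty] at hcard
    refine ⟨_, h.hasPrivateWitnesses_of_isolated_v2 (hU'.anti Set.sdiff_subset)
      (fun h2 => hz.1 h2.1) hiso, ?_⟩
    rw [Set.ncard_insert_of_notMem fun h0 => h0.2 h.v0_mem_pendantStar]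
    have := Set.pred_ncard_le_ncard_sdiff_singleton U' z
    omega
  push Not at hP
  have hcard := h.ncard_le_ncard_preimage_sdiff_add hU' fun _ => hP _
  by_cases hy : 𝐲 ∈ U'
  · refine ⟨_, h.hasPrivateWitnesses_of_mem_y hU' hP hy, ?_⟩
    have := Set.ncard_inter_le_ncard_right U' {𝐲}
    rw [Set.ncard_singleton] at this
    omega
  · rw [Set.inter_singleton_eq_empty.mpr hy, Set.ncard_empty] at hcard
    obtain ⟨d, hd⟩ : ∃ d, d = v2 ∧ inl v2 ∈ U' ∨ d = v3 ∧ inl v2 ∉ U' := by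
      by_cases h2 : inl v2 ∈ U'
      exacts [⟨v2, Or.inl ⟨rfl, h2⟩⟩, ⟨v3, Or.inr ⟨rfl, h2⟩⟩]
    refine ⟨_, h.hasPrivateWitnesses_of_not_mem_y hU' hP hy hd, ?_⟩
    have := Set.pred_ncard_le_ncard_sdiff_singleton (insert v1 (inl ⁻¹' U' \ S)) d
    omega

theorem superDomNum_add_one_le [Finite V] (h : IsPendantStarPath T v0 v1 v2 v3) :
    superDomNum T + 1 ≤ superDomNum T' := by
  obtain ⟨U', hU', hcard'⟩ := exists_hasPrivateWitnesses_superDomNum_add_ncard_eq T'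
  obtain ⟨U, hU, hle⟩ := h.exists_hasPrivateWitnesses_ncard_le hU'
  have hcard := hU.superDomNum_add_ncard_le
  have hpair : s(v1, v2) ≠ s(v2, v3) := by simp [h.ne12, h.ne13]
  rw [Nat.card_sum, Nat.card_coe_set_eq, Set.ncard_pair hpair] at hcard'
  omega

end IsPendantStarPath

/-- If `T` is a tree of diameter at least 4 and `P = u₁u₂…` is a longest path, then
subdividing the edges `u₂u₃` and `u₃u₄` increases `γ_sp` by at least one. -/
theorem superDomNum_subdivide_longest_path {V : Type} [Fintype V] (T : SimpleGraph V)
    (hT : T.IsTree) {a b : V} (p : T.Walk a b) (hp : p.IsPath)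
    (hlong : ∀ {c d : V} (q : T.Walk c d), q.IsPath → q.length ≤ p.length)
    (hdiam : 4 ≤ p.length) :
    superDomNum T + 1 ≤
      superDomNum (subdivide T
        {s(p.getVert 1, p.getVert 2), s(p.getVert 2, p.getVert 3)}) :=
  (hT.isPendantStarPath hp hlong (by omega)).superDomNum_add_one_le
end
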